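/- arXiv:math/0411442 — 2 statements merged into one kernel-verified Lean document; each statement's English description precedes it below -/
import Mathlib

section
/- Let A be a unital C*-algebra, φ : A → M_n(ℂ) a positive unital linear map, f a convex function on an open interval I, and a ∈ A self-adjoint with spectrum in I. Then for each k = 1, …, n, the sum of the k largest eigenvalues of f(φ(a)) is at most the sum of the k largest eigenvalues of φ(f(a)). -/
open scoped ComplexOrder

/-- The eigenvalues of a (Hermitian) matrix arranged in non-increasing order, counted
with multiplicity; junk value `0` for non-Hermitian matrices. -/
noncomputable def eigDesc {n : ℕ} (A : Matrix (Fin n) (Fin n) ℂ) (i : Fin n) : ℝ :=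
  if h : A.IsHermitian then (h.eigenvalues ∘ Tuple.sort h.eigenvalues) i.rev else 0

/-!
Let `e` be an orthonormal eigenbasis of `φ a`, with eigenvalues `λ`. The matrix `f (φ a)` is
diagonal in `e` with entries `f (λ i)`, and `φ (f a)` has diagonal entries `⟪e i, φ (f a) e i⟫`.
Ky Fan's maximum principle (the sum of the `k` largest eigenvalues of a Hermitian matrix dominates
`∑ j, ⟪u j, C u j⟫` over any `k` orthonormal vectors, with equality on eigenvectors) reduces the
claim to `f (λ i) ≤ ⟪e i, φ (f a) e i⟫` for each `i`. Since `λ i = ⟪e i, φ a e i⟫` and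
`x ↦ ⟪e i, φ x e i⟫` is a state, this is Jensen's inequality for states: a supporting line
`ℓ ≤ f` at `⟪e i, φ a e i⟫` gives `ℓ a ≤ f a` by the functional calculus, and the state
commutes with the affine `ℓ`.
-/

open Finset Matrix
open scoped InnerProductSpace

lemma Finset.sum_mul_le_sum_of_forall_le_of_notMem {ι : Type*} [Fintype ι] [DecidableEq ι]
    {w c : ι → ℝ} {S : Finset ι} (htop : ∀ i ∈ S, ∀ j ∉ S, w j ≤ w i) (hc₀ : ∀ i, 0 ≤ c i)
    (hc₁ : ∀ i, c i ≤ 1) (hc : ∑ i, c i = #S) :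
    ∑ i, w i * c i ≤ ∑ i ∈ S, w i := by
  obtain ⟨t, hSt, htSc⟩ : ∃ t, (∀ i ∈ S, t ≤ w i) ∧ ∀ j ∉ S, w j ≤ t := by
    rcases S.eq_empty_or_nonempty with rfl | hS
    · obtain ⟨t, ht⟩ := (Set.finite_range w).bddAbove
      exact ⟨t, by simp, fun j _ => ht ⟨j, rfl⟩⟩
    · exact ⟨S.inf' hS w, fun i hi => inf'_le w hi,
        fun j hj => le_inf' hS w fun i hi => htop i hi j hj⟩
  have hcompl : ∑ j ∈ Sᶜ, c j = ∑ i ∈ S, (1 - c i) := by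
    rw [sum_sub_distrib, sum_const, nsmul_one, ← hc, ← sum_add_sum_compl S c]
    ring
  calc ∑ i, w i * c i = ∑ i ∈ S, w i * c i + ∑ j ∈ Sᶜ, w j * c j :=
        (sum_add_sum_compl S _).symm
    _ ≤ ∑ i ∈ S, w i * c i + ∑ j ∈ Sᶜ, t * c j := by
        gcongr with j hj
        · exact hc₀ j
        · exact htSc j (mem_compl.mp hj)
    _ = ∑ i ∈ S, w i * c i + ∑ i ∈ S, t * (1 - c i) := by rw [← mul_sum, ← mul_sum, hcompl]
    _ ≤ ∑ i ∈ S, w i * c i + ∑ i ∈ S, w i * (1 - c i) := by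
        gcongr with i hi
        · exact sub_nonneg.mpr (hc₁ i)
        · exact hSt i hi
    _ = ∑ i ∈ S, w i := by
        rw [← sum_add_distrib]
        exact sum_congr rfl fun i _ => by ring

section TopSet

variable {n : ℕ}

-- `Tuple.sort w` lists `w` in increasing order, so these are indices of `k` largest entries.
noncomputable def topSet (w : Fin n → ℝ) (k : ℕ) : Finset (Fin n) :=
  {i | n - k ≤ ((Tuple.sort w).symm i : ℕ)}

lemma sort_rev_mem_topSet_iff (w : Fin n → ℝ) (k : ℕ) (i : Fin n) :
    Tuple.sort w i.rev ∈ topSet w k ↔ (i : ℕ) < k := by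
  simp only [topSet, mem_filter, mem_univ, true_and, Equiv.symm_apply_apply, Fin.val_rev]
  omega

lemma card_topSet (w : Fin n → ℝ) {k : ℕ} (hk : k ≤ n) : #(topSet w k) = k := by
  rw [← card_equiv (Fin.revPerm.trans (Tuple.sort w)) (s := {i : Fin n | (i : ℕ) < k})
    fun i => by simpa using (sort_rev_mem_topSet_iff w k i).symm, Fin.card_filter_val_lt]
  omega

lemma le_of_mem_topSet_of_notMem {w : Fin n → ℝ} {k : ℕ} {i j : Fin n} (hi : i ∈ topSet w k)
    (hj : j ∉ topSet w k) : w j ≤ w i := by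
  simp only [topSet, mem_filter, mem_univ, true_and, not_le] at hi hj
  simpa using Tuple.monotone_sort w (show (Tuple.sort w).symm j ≤ (Tuple.sort w).symm i by
    rw [Fin.le_def]; omega)

lemma sum_eigDesc_eq_sum_topSet {C : Matrix (Fin n) (Fin n) ℂ} (hC : C.IsHermitian) (k : ℕ) :
    ∑ i ∈ univ.filter (fun i : Fin n => (i : ℕ) < k), eigDesc C i =
      ∑ i ∈ topSet hC.eigenvalues k, hC.eigenvalues i := by
  refine sum_equiv (Fin.revPerm.trans (Tuple.sort hC.eigenvalues))
    (fun i => by simpa using (sort_rev_mem_topSet_iff _ k i).symm) fun i _ => ?_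
  simp [eigDesc, dif_pos hC]

end TopSet

namespace OrthonormalBasis

variable {𝕜 E ι : Type*} [RCLike 𝕜] [NormedAddCommGroup E] [InnerProductSpace 𝕜 E] [Fintype ι]
  (v : OrthonormalBasis ι 𝕜 E) {T : E →ₗ[𝕜] E} {ρ : ι → ℝ}

lemma re_inner_map_self_eq_sum (hT : ∀ i, T (v i) = (ρ i : 𝕜) • v i) (x : E) :
    RCLike.re ⟪x, T x⟫_𝕜 = ∑ i, ρ i * ‖⟪v i, x⟫_𝕜‖ ^ 2 := by
  have hTx : T x = ∑ i, (⟪v i, x⟫_𝕜 * ρ i) • v i := by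
    conv_lhs => rw [← v.sum_repr' x]
    simp [hT, smul_smul]
  rw [hTx, inner_sum, map_sum]
  refine sum_congr rfl fun i _ => ?_
  rw [inner_smul_right, ← inner_conj_symm, mul_right_comm, RCLike.conj_mul, RCLike.norm_conj]
  norm_cast
  ring

lemma re_inner_map_self_eq (hT : ∀ i, T (v i) = (ρ i : 𝕜) • v i) (i : ι) :
    RCLike.re ⟪v i, T (v i)⟫_𝕜 = ρ i := by
  simp [hT, inner_smul_right, inner_self_eq_norm_sq_to_K, v.orthonormal.1 i]

/-- Ky Fan's maximum principle: the weights `∑ j ∈ S, ‖⟪v i, u j⟫‖ ^ 2` lie in `[0, 1]` by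
Bessel's inequality and add up to `#S` by Parseval's identity. -/
lemma sum_re_inner_map_self_le [DecidableEq ι] (hT : ∀ i, T (v i) = (ρ i : 𝕜) • v i)
    {κ : Type*} {u : κ → E} (hu : Orthonormal 𝕜 u) {S : Finset κ} {S' : Finset ι}
    (hcard : #S' = #S) (htop : ∀ i ∈ S', ∀ j ∉ S', ρ j ≤ ρ i) :
    ∑ j ∈ S, RCLike.re ⟪u j, T (u j)⟫_𝕜 ≤ ∑ i ∈ S', ρ i := by
  calc ∑ j ∈ S, RCLike.re ⟪u j, T (u j)⟫_𝕜 = ∑ i, ρ i * ∑ j ∈ S, ‖⟪v i, u j⟫_𝕜‖ ^ 2 := by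
        simp_rw [v.re_inner_map_self_eq_sum hT, mul_sum]
        exact sum_comm
    _ ≤ ∑ i ∈ S', ρ i := by
        refine sum_mul_le_sum_of_forall_le_of_notMem htop (fun i => by positivity)
          (fun i => ?_) ?_
        · calc ∑ j ∈ S, ‖⟪v i, u j⟫_𝕜‖ ^ 2 = ∑ j ∈ S, ‖⟪u j, v i⟫_𝕜‖ ^ 2 := by
                simp_rw [norm_inner_symm]
            _ ≤ ‖v i‖ ^ 2 := hu.sum_inner_products_le (v i)
            _ = 1 := by simp [v.orthonormal.1 i]
        · rw [sum_comm]
          simp [v.sum_sq_norm_inner_right, hu.1, hcard]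

end OrthonormalBasis

namespace Matrix.IsHermitian

variable {𝕜 ι : Type*} [RCLike 𝕜] [Fintype ι] [DecidableEq ι] {A : Matrix ι ι 𝕜}
  (hA : A.IsHermitian)

lemma toEuclideanLin_cfc_eigenvectorBasis (f : ℝ → ℝ) (i : ι) :
    toEuclideanLin (cfc f A) (hA.eigenvectorBasis i) =
      (f (hA.eigenvalues i) : 𝕜) • hA.eigenvectorBasis i := by
  ext1
  rw [toLpLin_apply, hA.cfc_eq, IsHermitian.cfc, Unitary.conjStarAlgAut_apply, ← mulVec_mulVec,
    ← mulVec_mulVec, hA.star_eigenvectorUnitary_mulVec, diagonal_mulVec_single,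
    Function.comp_apply, ← smul_eq_mul, Pi.single_smul', mulVec_smul,
    hA.eigenvectorUnitary_mulVec]
  rfl

lemma toEuclideanLin_eigenvectorBasis (i : ι) :
    toEuclideanLin A (hA.eigenvectorBasis i) =
      (hA.eigenvalues i : 𝕜) • hA.eigenvectorBasis i := by
  simpa [cfc_id ℝ A hA.isSelfAdjoint] using hA.toEuclideanLin_cfc_eigenvectorBasis id i

end Matrix.IsHermitian

section KyFan

variable {n : ℕ}

lemma sum_eigDesc_le_sum_topSet {C : Matrix (Fin n) (Fin n) ℂ} (hC : C.IsHermitian)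
    (v : OrthonormalBasis (Fin n) ℂ (EuclideanSpace ℂ (Fin n))) {ρ : Fin n → ℝ}
    (hv : ∀ i, toEuclideanLin C (v i) = (ρ i : ℂ) • v i) {k : ℕ} (hk : k ≤ n) :
    ∑ i ∈ univ.filter (fun i : Fin n => (i : ℕ) < k), eigDesc C i ≤ ∑ i ∈ topSet ρ k, ρ i := by
  let e := hC.eigenvectorBasis
  calc ∑ i ∈ univ.filter (fun i : Fin n => (i : ℕ) < k), eigDesc C i
      = ∑ j ∈ topSet hC.eigenvalues k, RCLike.re ⟪e j, toEuclideanLin C (e j)⟫_ℂ := by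
        rw [sum_eigDesc_eq_sum_topSet hC]
        exact sum_congr rfl fun j _ =>
          (e.re_inner_map_self_eq hC.toEuclideanLin_eigenvectorBasis j).symm
    _ ≤ ∑ i ∈ topSet ρ k, ρ i :=
        v.sum_re_inner_map_self_le hv e.orthonormal (by rw [card_topSet _ hk, card_topSet _ hk])
          fun _ hi _ hj => le_of_mem_topSet_of_notMem hi hj

lemma sum_re_inner_le_sum_eigDesc {D : Matrix (Fin n) (Fin n) ℂ} (hD : D.IsHermitian)
    {κ : Type*} {u : κ → EuclideanSpace ℂ (Fin n)} (hu : Orthonormal ℂ u) {S : Finset κ}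
    {k : ℕ} (hS : #S = k) (hk : k ≤ n) :
    ∑ j ∈ S, RCLike.re ⟪u j, toEuclideanLin D (u j)⟫_ℂ ≤
      ∑ i ∈ univ.filter (fun i : Fin n => (i : ℕ) < k), eigDesc D i := by
  rw [sum_eigDesc_eq_sum_topSet hD]
  exact hD.eigenvectorBasis.sum_re_inner_map_self_le hD.toEuclideanLin_eigenvectorBasis hu
    (by rw [card_topSet _ hk, hS]) fun _ hi _ hj => le_of_mem_topSet_of_notMem hi hj

end KyFan

lemma ConvexOn.add_rightDeriv_mul_sub_le {S : Set ℝ} {f : ℝ → ℝ} (hf : ConvexOn ℝ S f) {x y : ℝ}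
    (hx : x ∈ interior S) (hy : y ∈ S) : f x + derivWithin f (Set.Ioi x) x * (y - x) ≤ f y := by
  rcases lt_trichotomy x y with hxy | rfl | hyx
  · have h := hf.rightDeriv_le_slope_of_mem_interior hx hy hxy
    rw [slope_def_field, le_div_iff₀ (sub_pos.2 hxy)] at h
    linarith
  · simp
  · have h := hf.slope_le_leftDeriv_of_mem_interior hy hx hyx
    rw [slope_def_field, div_le_iff₀ (sub_pos.2 hyx)] at h
    nlinarith [hf.leftDeriv_le_rightDeriv_of_mem_interior hx]

section Jensen

variable {A : Type*} [CStarAlgebra A] [PartialOrder A] [StarOrderedRing A]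

lemma ConvexOn.apply_re_le_re_apply_cfc {I : Set ℝ} {f : ℝ → ℝ} (hf : ConvexOn ℝ I f)
    (hI : IsOpen I) (ω : A →ₚ[ℂ] ℂ) (hω : ω 1 = 1) {a : A} (ha : IsSelfAdjoint a)
    (hspec : spectrum ℝ a ⊆ I) : f (ω a).re ≤ (ω (cfc f a)).re := by
  have : Nontrivial A := ⟨0, 1, fun h => by simp [← h] at hω⟩
  have hmono : ∀ {x y : A}, x ≤ y → (ω x).re ≤ (ω y).re := fun h =>
    (Complex.le_def.mp (OrderHomClass.mono ω h)).1
  have hω_alg : ∀ r : ℝ, ω (algebraMap ℝ A r) = r := fun r => by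
    rw [Algebra.algebraMap_eq_smul_one, PositiveLinearMap.map_smul_of_tower, hω,
      Complex.real_smul, mul_one]
  set m := (ω a).re
  have hmI : m ∈ interior I := by
    have hcpt := ContinuousFunctionalCalculus.isCompact_spectrum (R := ℝ) a
    have hne := ContinuousFunctionalCalculus.spectrum_nonempty (R := ℝ) a ha
    obtain ⟨lo, hlo, hlo_le⟩ := hcpt.exists_isMinOn hne continuousOn_id
    obtain ⟨hi, hhi, hhi_le⟩ := hcpt.exists_isMaxOn hne continuousOn_id
    rw [hI.interior_eq]
    refine hf.1.ordConnected.out (hspec hlo) (hspec hhi) ⟨?_, ?_⟩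
    · simpa [hω_alg] using hmono ((algebraMap_le_iff_le_spectrum ha).2 hlo_le)
    · simpa [hω_alg] using hmono ((le_algebraMap_iff_spectrum_le ha).2 hhi_le)
  set s := derivWithin f (Set.Ioi m) m
  have hsub : cfc (fun t => (f m - s * m) + s * t) a ≤ cfc f a :=
    cfc_mono (fun t ht => by linarith [hf.add_rightDeriv_mul_sub_le hmI (hspec ht)])
      (by fun_prop) ((hf.continuousOn hI).mono hspec)
  have hline : (ω (cfc (fun t => (f m - s * m) + s * t) a)).re = f m := by
    rw [cfc_const_add (f m - s * m) (s * ·) a, cfc_const_mul_id s a, map_add, hω_alg,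
      PositiveLinearMap.map_smul_of_tower, Complex.add_re, Complex.ofReal_re, Complex.smul_re,
      smul_eq_mul]
    change f m - s * m + s * m = f m
    ring
  exact hline ▸ hmono hsub

end Jensen

section VectorState

lemma Matrix.PosSemidef.inner_toEuclideanLin_self_nonneg {𝕜 ι : Type*} [RCLike 𝕜] [Fintype ι]
    [DecidableEq ι] {M : Matrix ι ι 𝕜} (hM : M.PosSemidef) (u : EuclideanSpace 𝕜 ι) :
    0 ≤ ⟪u, toEuclideanLin M u⟫_𝕜 := by
  rw [EuclideanSpace.inner_eq_star_dotProduct, ofLp_toLpLin, dotProduct_comm]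
  exact hM.dotProduct_mulVec_nonneg _

variable {A ι : Type*} [CStarAlgebra A] [PartialOrder A] [StarOrderedRing A]
  {φ : A →ₗ[ℂ] Matrix ι ι ℂ} (hφ : ∀ x, 0 ≤ x → (φ x).PosSemidef)

include hφ in
lemma isHermitian_apply_of_isSelfAdjoint {x : A} (hx : IsSelfAdjoint x) : (φ x).IsHermitian := by
  rw [← CFC.posPart_sub_negPart x hx, map_sub]
  exact (hφ _ (CFC.posPart_nonneg x)).1.sub (hφ _ (CFC.negPart_nonneg x)).1

variable [Fintype ι] [DecidableEq ι]

noncomputable def vectorStateComp (u : EuclideanSpace ℂ ι) : A →ₚ[ℂ] ℂ :=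
  .mk₀
    { toFun x := ⟪u, toEuclideanLin (φ x) u⟫_ℂ
      map_add' x y := by simp
      map_smul' c x := by simp }
    fun x hx => (hφ x hx).inner_toEuclideanLin_self_nonneg u

@[simp]
lemma vectorStateComp_apply (u : EuclideanSpace ℂ ι) (x : A) :
    vectorStateComp hφ u x = ⟪u, toEuclideanLin (φ x) u⟫_ℂ :=
  rfl

lemma vectorStateComp_apply_one (hφ₁ : φ 1 = 1) {u : EuclideanSpace ℂ ι} (hu : ‖u‖ = 1) :
    vectorStateComp hφ u 1 = 1 := by
  simp [hφ₁, hu]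

end VectorState

theorem jensen_matrix_majorization_general {A : Type*}
    [CStarAlgebra A] [PartialOrder A] [StarOrderedRing A] {n : ℕ}
    (φ : A →ₗ[ℂ] Matrix (Fin n) (Fin n) ℂ)
    (hφ_pos : ∀ x : A, 0 ≤ x → (φ x).PosSemidef) (hφ_unital : φ 1 = 1)
    (I : Set ℝ) (hI_open : IsOpen I)
    (f : ℝ → ℝ) (hf : ConvexOn ℝ I f)
    (a : A) (ha : IsSelfAdjoint a) (hspec : spectrum ℝ a ⊆ I) :
    ∀ k : ℕ, k ≤ n →
      ∑ i ∈ Finset.filter (fun i : Fin n => (i : ℕ) < k) Finset.univ,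
          eigDesc (cfc f (φ a)) i ≤
        ∑ i ∈ Finset.filter (fun i : Fin n => (i : ℕ) < k) Finset.univ,
          eigDesc (φ (cfc f a)) i := by
  intro k hk
  have hB := isHermitian_apply_of_isSelfAdjoint hφ_pos ha
  let e := hB.eigenvectorBasis
  calc ∑ i ∈ univ.filter (fun i : Fin n => (i : ℕ) < k), eigDesc (cfc f (φ a)) i
      ≤ ∑ i ∈ topSet (f ∘ hB.eigenvalues) k, f (hB.eigenvalues i) :=
        sum_eigDesc_le_sum_topSet (cfc_predicate f _) e
          (hB.toEuclideanLin_cfc_eigenvectorBasis f) hk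
    _ ≤ ∑ i ∈ topSet (f ∘ hB.eigenvalues) k,
          RCLike.re ⟪e i, toEuclideanLin (φ (cfc f a)) (e i)⟫_ℂ := by
        gcongr with i
        rw [← e.re_inner_map_self_eq hB.toEuclideanLin_eigenvectorBasis i]
        exact hf.apply_re_le_re_apply_cfc hI_open (vectorStateComp hφ_pos (e i))
          (vectorStateComp_apply_one hφ_pos hφ_unital (e.orthonormal.1 i)) ha hspec
    _ ≤ ∑ i ∈ univ.filter (fun i : Fin n => (i : ℕ) < k), eigDesc (φ (cfc f a)) i :=
        sum_re_inner_le_sum_eigDesc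
          (isHermitian_apply_of_isSelfAdjoint hφ_pos (cfc_predicate f a)) e.orthonormal
          (card_topSet _ hk) hk

/-- Jensen's inequality with respect to (sub)majorization: if `φ : A → M_n(ℂ)` is a
positive unital map, `f` convex on an open interval `I`, and `a` selfadjoint with
spectrum in `I`, then for each `k` the sum of the `k` largest eigenvalues of `f(φ(a))`
is at most that of `φ(f(a))`. -/
theorem jensen_matrix_majorization {A : Type*}
    [CStarAlgebra A] [PartialOrder A] [StarOrderedRing A] {n : ℕ}
    (φ : A →ₗ[ℂ] Matrix (Fin n) (Fin n) ℂ)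
    (hφ_pos : ∀ x : A, 0 ≤ x → (φ x).PosSemidef) (hφ_unital : φ 1 = 1)
    (I : Set ℝ) (hI_open : IsOpen I) (hI_conn : I.OrdConnected)
    (f : ℝ → ℝ) (hf : ConvexOn ℝ I f)
    (a : A) (ha : IsSelfAdjoint a) (hspec : spectrum ℝ a ⊆ I) :
    ∀ k : ℕ, k ≤ n →
      ∑ i ∈ Finset.filter (fun i : Fin n => (i : ℕ) < k) Finset.univ,
          eigDesc (cfc f (φ a)) i ≤
        ∑ i ∈ Finset.filter (fun i : Fin n => (i : ℕ) < k) Finset.univ,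
          eigDesc (φ (cfc f a)) i :=
  jensen_matrix_majorization_general φ hφ_pos hφ_unital I hI_open f hf a ha hspec
end

section
/- Let W_1, …, W_r be m×n complex matrices with Σ_{i=1}^r W_i* W_i = I_n, let f be a convex function on an open interval I, and let A be a Hermitian m×m matrix with spectrum in I. Then for every k = 1, …, n, Σ_{i=1}^k λ_i(f(Σ_j W_j* A W_j)) ≤ Σ_{i=1}^k λ_i(Σ_j W_j* f(A) W_j). -/
open scoped ComplexOrder
open Matrix

/-!
Write `Φ X = ∑ j, W jᴴ * X * W j` and let `u p` be orthonormal eigenvectors of `B = Φ A`, with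
eigenvalues `μ p`. For a unit vector `u`, expanding each `W j u` in an eigenbasis of `A` writes
`⟪u, Φ X u⟫` for `X = A`, `f A` and `1` as averages of `λ q (A)`, `f (λ q (A))` and `1` with the
same nonnegative weights; so these weights sum to `1` and Jensen's inequality gives
`f ⟪u, Φ A u⟫ ≤ ⟪u, Φ (f A) u⟫`.

Ky Fan's maximum principle bounds `∑ i ∈ T, ⟪v i, M v i⟫`, for an orthonormal family `v` and
`#T = k`, by the sum of the `k` largest eigenvalues of `M`: in an eigenbasis `e` of `M` it is
`∑ p, t p * λ p` with `t p = ∑ i ∈ T, ‖⟪e p, v i⟫‖²`, and `0 ≤ t p ≤ 1`, `∑ p, t p = k` by Bessel and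
Parseval. Since the `u p` are also eigenvectors of `f B`, with eigenvalues `f (μ p)`, applying it
twice gives, for `S` indexing the `k` largest values `f (μ p)`,
`∑_{i<k} λ_i (f B) ≤ ∑ p ∈ S, f ⟪u p, B u p⟫ ≤ ∑ p ∈ S, ⟪u p, Φ (f A) u p⟫ ≤ ∑_{i<k} λ_i (Φ (f A))`.
-/

open Finset
open scoped InnerProductSpace

lemma Finset.sum_mul_le_sum_of_threshold {ι : Type*} [Fintype ι] [DecidableEq ι]
    {lam t : ι → ℝ} {T : Finset ι} (c : ℝ) (hT : ∀ p ∈ T, c ≤ lam p)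
    (hTc : ∀ p ∉ T, lam p ≤ c) (ht0 : ∀ p, 0 ≤ t p) (ht1 : ∀ p, t p ≤ 1)
    (htT : ∑ p, t p = #T) :
    ∑ p, t p * lam p ≤ ∑ p ∈ T, lam p := by
  have hmass : ∑ p ∈ Tᶜ, t p = ∑ p ∈ T, (1 - t p) := by
    have := sum_add_sum_compl T t
    simp only [sum_sub_distrib, sum_const, nsmul_eq_mul, mul_one]
    linarith
  calc ∑ p, t p * lam p = ∑ p ∈ T, t p * lam p + ∑ p ∈ Tᶜ, t p * lam p :=
        (sum_add_sum_compl T _).symm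
    _ ≤ ∑ p ∈ T, t p * lam p + ∑ p ∈ Tᶜ, t p * c := by
        gcongr with p hp
        · exact ht0 p
        · exact hTc p (mem_compl.mp hp)
    _ = ∑ p ∈ T, t p * lam p + ∑ p ∈ T, (1 - t p) * c := by rw [← sum_mul, hmass, sum_mul]
    _ ≤ ∑ p ∈ T, t p * lam p + ∑ p ∈ T, (1 - t p) * lam p := by
        gcongr with p hp
        · exact sub_nonneg.mpr (ht1 p)
        · exact hT p hp
    _ = ∑ p ∈ T, lam p := by
        rw [← sum_add_distrib]
        exact sum_congr rfl fun p _ => by ring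

section SumLargest

variable {n : ℕ}

noncomputable def sortDescPerm (lam : Fin n → ℝ) : Equiv.Perm (Fin n) :=
  Fin.revPerm.trans (Tuple.sort lam)

lemma antitone_comp_sortDescPerm (lam : Fin n → ℝ) : Antitone (lam ∘ sortDescPerm lam) :=
  fun _ _ hij => Tuple.monotone_sort lam (Fin.rev_le_rev.mpr hij)

noncomputable def topIndices (k : ℕ) (lam : Fin n → ℝ) : Finset (Fin n) :=
  (univ.filter fun i : Fin n => (i : ℕ) < k).map (sortDescPerm lam).toEmbedding

noncomputable def sumLargest (k : ℕ) (lam : Fin n → ℝ) : ℝ :=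
  ∑ i ∈ univ.filter (fun i : Fin n => (i : ℕ) < k), lam (sortDescPerm lam i)

lemma card_topIndices {k : ℕ} (hk : k ≤ n) (lam : Fin n → ℝ) : #(topIndices k lam) = k := by
  simp [topIndices, Fin.card_filter_val_lt, hk]

lemma sum_topIndices (k : ℕ) (lam : Fin n → ℝ) :
    ∑ p ∈ topIndices k lam, lam p = sumLargest k lam :=
  sum_map _ _ _

lemma sum_mul_le_sumLargest {k : ℕ} (lam t : Fin n → ℝ) (ht0 : ∀ p, 0 ≤ t p)
    (ht1 : ∀ p, t p ≤ 1) (htk : ∑ p, t p = k) :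
    ∑ p, t p * lam p ≤ sumLargest k lam := by
  have hk : k ≤ n := by
    have := sum_le_sum fun p (_ : p ∈ univ) => ht1 p
    simp only [htk, sum_const, card_univ, Fintype.card_fin, nsmul_eq_mul, mul_one] at this
    exact_mod_cast this
  rcases Nat.eq_zero_or_pos n with rfl | hn
  · simp [sumLargest]
  set π := sortDescPerm lam
  have hmem (i : Fin n) : π i ∈ topIndices k lam ↔ (i : ℕ) < k := by simp [topIndices, π]
  -- the `k`-th largest value; for `k = 0` the truncated `k - 1` makes it the largest one
  let j : Fin n := ⟨k - 1, by omega⟩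
  rw [← sum_topIndices]
  refine sum_mul_le_sum_of_threshold (lam (π j)) (fun p hp => ?_) (fun p hp => ?_)
    ht0 ht1 (by rw [htk, card_topIndices hk])
  · obtain ⟨i, rfl⟩ := π.surjective p
    rw [hmem] at hp
    exact antitone_comp_sortDescPerm lam (show (i : ℕ) ≤ k - 1 by omega)
  · obtain ⟨i, rfl⟩ := π.surjective p
    rw [hmem] at hp
    exact antitone_comp_sortDescPerm lam (show k - 1 ≤ (i : ℕ) by omega)

end SumLargest

lemma Matrix.dotProduct_sum_conjTranspose_mul_mul_mulVec {α : Type*} [CommSemiring α]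
    [StarRing α] {m n ι : Type*} [Fintype m] [Fintype n] [Fintype ι] (W : ι → Matrix m n α)
    (M : Matrix m m α) (u : n → α) :
    star u ⬝ᵥ ((∑ j, (W j)ᴴ * M * W j) *ᵥ u) = ∑ j, star (W j *ᵥ u) ⬝ᵥ (M *ᵥ (W j *ᵥ u)) := by
  rw [sum_mulVec, dotProduct_sum]
  refine sum_congr rfl fun j _ => ?_
  rw [← mulVec_mulVec, ← mulVec_mulVec, dotProduct_mulVec, ← star_mulVec]

section RCLike

variable {𝕜 : Type*} [RCLike 𝕜]

lemma EuclideanSpace.re_star_dotProduct_self {ι : Type*} [Fintype ι] (u : EuclideanSpace 𝕜 ι) :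
    RCLike.re (star ⇑u ⬝ᵥ ⇑u) = ‖u‖ ^ 2 := by
  rw [dotProduct_comm, ← EuclideanSpace.inner_eq_star_dotProduct, inner_self_eq_norm_sq]

lemma Matrix.re_star_dotProduct_mulVec_eq_sum {ι : Type*} [Fintype ι] {M : Matrix ι ι 𝕜}
    (e : OrthonormalBasis ι 𝕜 (EuclideanSpace 𝕜 ι)) {ν : ι → ℝ}
    (he : ∀ q, M *ᵥ ⇑(e q) = ν q • ⇑(e q)) (x : EuclideanSpace 𝕜 ι) :
    RCLike.re (star ⇑x ⬝ᵥ (M *ᵥ ⇑x)) = ∑ q, ν q * ‖⟪e q, x⟫_𝕜‖ ^ 2 := by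
  have hx : M *ᵥ ⇑x = ∑ q, ⟪e q, x⟫_𝕜 • ν q • ⇑(e q) := by
    conv_lhs => rw [← e.sum_repr' x]
    simp [mulVec_sum, mulVec_smul, he]
  have hq (q : ι) :
      star ⇑x ⬝ᵥ (⟪e q, x⟫_𝕜 • ν q • ⇑(e q)) = (ν q * ‖⟪e q, x⟫_𝕜‖ ^ 2 : ℝ) := by
    rw [dotProduct_smul, dotProduct_smul, dotProduct_comm,
      ← EuclideanSpace.inner_eq_star_dotProduct, ← inner_conj_symm, RCLike.real_smul_eq_coe_mul,
      smul_eq_mul, mul_left_comm, RCLike.conj_mul, RCLike.norm_conj]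
    push_cast
    ring
  rw [hx, dotProduct_sum, sum_congr rfl fun q _ => hq q, ← RCLike.ofReal_sum, RCLike.ofReal_re]

lemma Matrix.sum_re_star_dotProduct_mulVec_le_sumLargest {n : ℕ} {M : Matrix (Fin n) (Fin n) 𝕜}
    (e : OrthonormalBasis (Fin n) 𝕜 (EuclideanSpace 𝕜 (Fin n))) {lam : Fin n → ℝ}
    (he : ∀ p, M *ᵥ ⇑(e p) = lam p • ⇑(e p)) {κ : Type*} {v : κ → EuclideanSpace 𝕜 (Fin n)}
    (hv : Orthonormal 𝕜 v) (T : Finset κ) :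
    ∑ i ∈ T, RCLike.re (star ⇑(v i) ⬝ᵥ (M *ᵥ ⇑(v i))) ≤ sumLargest #T lam := by
  set t : Fin n → ℝ := fun p => ∑ i ∈ T, ‖⟪e p, v i⟫_𝕜‖ ^ 2
  have hsum : ∑ i ∈ T, RCLike.re (star ⇑(v i) ⬝ᵥ (M *ᵥ ⇑(v i))) = ∑ p, t p * lam p := by
    simp only [re_star_dotProduct_mulVec_eq_sum e he, t, sum_mul]
    rw [sum_comm]
    exact sum_congr rfl fun p _ => sum_congr rfl fun i _ => mul_comm _ _
  rw [hsum]
  refine sum_mul_le_sumLargest lam t (fun p => by positivity) (fun p => ?_) ?_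
  · calc t p = ∑ i ∈ T, ‖⟪v i, e p⟫_𝕜‖ ^ 2 := by simp only [t, norm_inner_symm]
      _ ≤ ‖e p‖ ^ 2 := hv.sum_inner_products_le (e p)
      _ = 1 := by simp
  · simp only [t]
    rw [sum_comm]
    simp [e.sum_sq_norm_inner_right, hv.1]

variable {m n : Type*} [Fintype m] [DecidableEq m]

lemma Matrix.IsHermitian.cfc_mulVec_eigenvectorBasis {A : Matrix m m 𝕜} (hA : A.IsHermitian)
    (f : ℝ → ℝ) (j : m) :
    cfc f A *ᵥ ⇑(hA.eigenvectorBasis j) = f (hA.eigenvalues j) • ⇑(hA.eigenvectorBasis j) := by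
  rw [hA.cfc_eq, IsHermitian.cfc, Unitary.conjStarAlgAut_apply, ← mulVec_mulVec,
    ← mulVec_mulVec, hA.star_eigenvectorUnitary_mulVec, diagonal_mulVec_single,
    ← hA.eigenvectorUnitary_mulVec, mul_one, ← mulVec_smul]
  congr 1
  ext i
  by_cases h : i = j <;> simp [h, RCLike.real_smul_eq_coe_mul]

lemma ConvexOn.map_re_star_dotProduct_sum_conj_mulVec_le [Fintype n] [DecidableEq n]
    {ι : Type*} [Fintype ι] {W : ι → Matrix m n 𝕜} (hW : ∑ j, (W j)ᴴ * W j = 1)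
    {A : Matrix m m 𝕜} (hA : A.IsHermitian) {I : Set ℝ} (hAspec : spectrum ℝ A ⊆ I)
    {f : ℝ → ℝ} (hf : ConvexOn ℝ I f) {u : EuclideanSpace 𝕜 n} (hu : ‖u‖ = 1) :
    f (RCLike.re (star ⇑u ⬝ᵥ ((∑ j, (W j)ᴴ * A * W j) *ᵥ ⇑u))) ≤
      RCLike.re (star ⇑u ⬝ᵥ ((∑ j, (W j)ᴴ * cfc f A * W j) *ᵥ ⇑u)) := by
  set a := hA.eigenvectorBasis
  set wgt : m → ℝ := fun q => ∑ j, ‖⟪a q, WithLp.toLp 2 (W j *ᵥ ⇑u)⟫_𝕜‖ ^ 2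
  have hexp {M : Matrix m m 𝕜} {ν : m → ℝ} (hν : ∀ q, M *ᵥ ⇑(a q) = ν q • ⇑(a q)) :
      RCLike.re (star ⇑u ⬝ᵥ ((∑ j, (W j)ᴴ * M * W j) *ᵥ ⇑u)) = ∑ q, wgt q * ν q := by
    rw [dotProduct_sum_conjTranspose_mul_mul_mulVec, map_sum]
    simp only [fun j => re_star_dotProduct_mulVec_eq_sum a hν (WithLp.toLp 2 (W j *ᵥ ⇑u)), wgt,
      sum_mul]
    rw [sum_comm]
    exact sum_congr rfl fun q _ => sum_congr rfl fun j _ => mul_comm _ _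
  have hwgt : ∑ q, wgt q = 1 := by
    simpa [hW, EuclideanSpace.re_star_dotProduct_self, hu] using
      (hexp (M := 1) (ν := 1) (by simp)).symm
  rw [hexp hA.mulVec_eigenvectorBasis, hexp (hA.cfc_mulVec_eigenvectorBasis f)]
  simpa only [smul_eq_mul] using hf.map_sum_le (fun q _ => by positivity) hwgt
    (fun q _ => hAspec (hA.eigenvalues_mem_spectrum_real q))

end RCLike

lemma sum_eigDesc_eq_sumLargest {n : ℕ} {M : Matrix (Fin n) (Fin n) ℂ} (hM : M.IsHermitian)
    (k : ℕ) :
    ∑ i ∈ univ.filter (fun i : Fin n => (i : ℕ) < k), eigDesc M i =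
      sumLargest k hM.eigenvalues := by
  simp only [eigDesc, dif_pos hM]
  rfl

theorem eigDesc_sum_cfc_conj_sum_le_general {m n r : ℕ}
    (W : Fin r → Matrix (Fin m) (Fin n) ℂ)
    (hW : ∑ j, (W j)ᴴ * W j = 1)
    (A : Matrix (Fin m) (Fin m) ℂ) (hA : A.IsHermitian)
    (I : Set ℝ)
    (hAspec : spectrum ℝ A ⊆ I)
    (f : ℝ → ℝ) (hf : ConvexOn ℝ I f) :
    ∀ k : ℕ, k ≤ n →
      ∑ i ∈ Finset.filter (fun i : Fin n => (i : ℕ) < k) Finset.univ,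
          eigDesc (cfc f (∑ j, (W j)ᴴ * A * W j)) i ≤
        ∑ i ∈ Finset.filter (fun i : Fin n => (i : ℕ) < k) Finset.univ,
          eigDesc (∑ j, (W j)ᴴ * cfc f A * W j) i := by
  intro k hk
  have hΦ {X : Matrix (Fin m) (Fin m) ℂ} (hX : X.IsHermitian) :
      (∑ j, (W j)ᴴ * X * W j).IsHermitian :=
    isSelfAdjoint_sum _ fun j _ => isHermitian_conjTranspose_mul_mul (W j) hX
  set B := ∑ j, (W j)ᴴ * A * W j
  have hB : B.IsHermitian := hΦ hA
  have hC := hΦ (cfc_predicate f A)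
  have hD : (cfc f B).IsHermitian := cfc_predicate f B
  set u := hB.eigenvectorBasis
  set S := topIndices k (f ∘ hB.eigenvalues)
  rw [sum_eigDesc_eq_sumLargest hD, sum_eigDesc_eq_sumLargest hC]
  calc sumLargest k hD.eigenvalues
      = ∑ i ∈ topIndices k hD.eigenvalues, RCLike.re (star ⇑(hD.eigenvectorBasis i) ⬝ᵥ
          (cfc f B *ᵥ ⇑(hD.eigenvectorBasis i))) := by
        rw [← sum_topIndices]
        exact sum_congr rfl fun i _ => hD.eigenvalues_eq i
    _ ≤ sumLargest k (f ∘ hB.eigenvalues) := by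
        have := sum_re_star_dotProduct_mulVec_le_sumLargest u (hB.cfc_mulVec_eigenvectorBasis f)
          hD.eigenvectorBasis.orthonormal (topIndices k hD.eigenvalues)
        rwa [card_topIndices hk] at this
    _ = ∑ p ∈ S, f (RCLike.re (star ⇑(u p) ⬝ᵥ (B *ᵥ ⇑(u p)))) := by
        rw [← sum_topIndices]
        exact sum_congr rfl fun p _ => congrArg f (hB.eigenvalues_eq p)
    _ ≤ ∑ p ∈ S, RCLike.re (star ⇑(u p) ⬝ᵥ ((∑ j, (W j)ᴴ * cfc f A * W j) *ᵥ ⇑(u p))) :=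
        sum_le_sum fun p _ =>
          hf.map_re_star_dotProduct_sum_conj_mulVec_le hW hA hAspec (u.orthonormal.1 p)
    _ ≤ sumLargest k hC.eigenvalues := by
        have := sum_re_star_dotProduct_mulVec_le_sumLargest hC.eigenvectorBasis
          hC.mulVec_eigenvectorBasis u.orthonormal S
        rwa [card_topIndices hk] at this

/-- Jensen's inequality for the completely positive unital map
`A ↦ Σ_j W_j* A W_j` (where `Σ_j W_j* W_j = 1`): for `f` convex on an open interval `I`
and `A` Hermitian with spectrum in `I`,
`Σ_{i≤k} λ_i(f(Σ_j W_j* A W_j)) ≤ Σ_{i≤k} λ_i(Σ_j W_j* f(A) W_j)` for every `k`. -/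
theorem eigDesc_sum_cfc_conj_sum_le {m n r : ℕ}
    (W : Fin r → Matrix (Fin m) (Fin n) ℂ)
    (hW : ∑ j, (W j)ᴴ * W j = 1)
    (A : Matrix (Fin m) (Fin m) ℂ) (hA : A.IsHermitian)
    (I : Set ℝ) (hI_open : IsOpen I) (hI_conn : I.OrdConnected)
    (hAspec : spectrum ℝ A ⊆ I)
    (f : ℝ → ℝ) (hf : ConvexOn ℝ I f) :
    ∀ k : ℕ, k ≤ n →
      ∑ i ∈ Finset.filter (fun i : Fin n => (i : ℕ) < k) Finset.univ,
          eigDesc (cfc f (∑ j, (W j)ᴴ * A * W j)) i ≤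
        ∑ i ∈ Finset.filter (fun i : Fin n => (i : ℕ) < k) Finset.univ,
          eigDesc (∑ j, (W j)ᴴ * cfc f A * W j) i :=
  eigDesc_sum_cfc_conj_sum_le_general W hW A hA I hAspec f hf
end
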